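/- Let r_1, ..., r_D be i.i.d. standard normal and x, y ∈ ℝ^D. Define u_m = ∑ x_i^m r_i and v_m = ∑ y_i^m r_i for m = 1,...,5, and X = ∑ x_i^6 + ∑ y_i^6 - 20 u_3 v_3 + 15 u_2 v_4 + 15 u_4 v_2 - 6 u_1 v_5 - 6 u_5 v_1. Then E[X] = ∑_{i=1}^D (x_i - y_i)^6. -/

import Mathlib

open Finset MeasureTheory ProbabilityTheory

/-! Independent centred variables of unit variance are orthonormal in `L²`, so the mixed
projections satisfy `E[u_a v_b] = ∑ i, x i ^ a * y i ^ b`. By linearity, `E[X]` is then the sum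
over coordinates of the binomial expansion of `(x i - y i) ^ 6`. -/

section
variable {Ω ι : Type*} [MeasurableSpace Ω] {μ : Measure Ω} {r : ι → Ω → ℝ}

lemma memLp_two_of_integral_sq_ne_zero {f : Ω → ℝ} (hf : AEStronglyMeasurable f μ)
    (h : ∫ ω, f ω ^ 2 ∂μ ≠ 0) : MemLp f 2 μ :=
  (memLp_two_iff_integrable_sq hf).2 (Integrable.of_integral_ne_zero h)

lemma integral_mul_eq_ite_of_iIndepFun [DecidableEq ι] (hmeas : ∀ i, AEStronglyMeasurable (r i) μ)
    (hindep : iIndepFun r μ) (h1 : ∀ i, ∫ ω, r i ω ∂μ = 0) (h2 : ∀ i, ∫ ω, r i ω ^ 2 ∂μ = 1)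
    (i j : ι) : ∫ ω, r i ω * r j ω ∂μ = if i = j then 1 else 0 := by
  split_ifs with hij
  · subst hij
    simpa only [sq] using h2 i
  · rw [(hindep.indepFun hij).integral_fun_mul_eq_mul_integral (hmeas i) (hmeas j), h1 i,
      zero_mul]

variable [Fintype ι]

lemma integrable_sum_mul_sum (hL2 : ∀ i, MemLp (r i) 2 μ) (a b : ι → ℝ) :
    Integrable (fun ω ↦ (∑ i, a i * r i ω) * (∑ j, b j * r j ω)) μ := by
  have hsum : ∀ c : ι → ℝ, MemLp (fun ω ↦ ∑ i, c i * r i ω) 2 μ := fun c ↦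
    memLp_finsetSum _ fun i _ ↦ (hL2 i).const_mul (c i)
  exact (hsum a).integrable_mul (hsum b)

lemma integral_sum_mul_sum_of_orthonormal [DecidableEq ι] (hL2 : ∀ i, MemLp (r i) 2 μ)
    (horth : ∀ i j, ∫ ω, r i ω * r j ω ∂μ = if i = j then 1 else 0) (a b : ι → ℝ) :
    ∫ ω, (∑ i, a i * r i ω) * (∑ j, b j * r j ω) ∂μ = ∑ i, a i * b i := by
  have hint : ∀ i j, Integrable (fun ω ↦ a i * b j * (r i ω * r j ω)) μ := fun i j ↦
    ((hL2 i).integrable_mul (hL2 j)).const_mul _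
  have hexpand : ∀ ω, (∑ i, a i * r i ω) * (∑ j, b j * r j ω)
      = ∑ i, ∑ j, a i * b j * (r i ω * r j ω) := fun ω ↦ by
    simp_rw [sum_mul_sum, mul_mul_mul_comm]
  simp_rw [hexpand]
  rw [integral_finsetSum _ fun i _ ↦ integrable_finsetSum _ fun j _ ↦ hint i j]
  refine sum_congr rfl fun i _ ↦ ?_
  rw [integral_finsetSum _ fun j _ ↦ hint i j]
  simp [integral_const_mul, horth]

end

theorem l6_estimator_unbiased_general {Ω : Type*} [MeasurableSpace Ω]
    (μ : Measure Ω) [IsProbabilityMeasure μ]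
    (D : ℕ) (r : Fin D → Ω → ℝ) (x y : Fin D → ℝ)
    (hmeas : ∀ i, Measurable (r i))
    (hindep : iIndepFun r μ)
    (h1 : ∀ i, ∫ ω, r i ω ∂μ = 0)
    (h2 : ∀ i, ∫ ω, (r i ω) ^ 2 ∂μ = 1) :
    ∫ ω, (∑ i, (x i) ^ 6 + ∑ i, (y i) ^ 6
        - 20 * ((∑ i, (x i) ^ 3 * r i ω) * (∑ i, (y i) ^ 3 * r i ω))
        + 15 * ((∑ i, (x i) ^ 2 * r i ω) * (∑ i, (y i) ^ 4 * r i ω))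
        + 15 * ((∑ i, (x i) ^ 4 * r i ω) * (∑ i, (y i) ^ 2 * r i ω))
        - 6 * ((∑ i, x i * r i ω) * (∑ i, (y i) ^ 5 * r i ω))
        - 6 * ((∑ i, (x i) ^ 5 * r i ω) * (∑ i, y i * r i ω))) ∂μ
      = ∑ i, (x i - y i) ^ 6 := by
  have hmeas' : ∀ i, AEStronglyMeasurable (r i) μ := fun i ↦ (hmeas i).aestronglyMeasurable
  have hL2 : ∀ i, MemLp (r i) 2 μ := fun i ↦
    memLp_two_of_integral_sq_ne_zero (hmeas' i) (by simp [h2])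
  have hint := integrable_sum_mul_sum hL2
  have hE := integral_sum_mul_sum_of_orthonormal hL2
    (integral_mul_eq_ite_of_iIndepFun hmeas' hindep h1 h2)
  rw [integral_sub, integral_sub, integral_add, integral_add, integral_sub]
  · simp only [integral_const, probReal_univ, one_smul, integral_const_mul, hE]
    simp only [mul_sum, ← sum_add_distrib, ← sum_sub_distrib]
    exact sum_congr rfl fun i _ ↦ by ring
  all_goals fun_prop (disch := exact hint _ _)

theorem l6_estimator_unbiased {Ω : Type*} [MeasurableSpace Ω]
    (μ : Measure Ω) [IsProbabilityMeasure μ]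
    (D : ℕ) (r : Fin D → Ω → ℝ) (x y : Fin D → ℝ)
    (hmeas : ∀ i, Measurable (r i))
    (hindep : iIndepFun r μ)
    (h1 : ∀ i, ∫ ω, r i ω ∂μ = 0)
    (h2 : ∀ i, ∫ ω, (r i ω) ^ 2 ∂μ = 1)
    (h3 : ∀ i, ∫ ω, (r i ω) ^ 3 ∂μ = 0)
    (h4 : ∀ i, ∫ ω, (r i ω) ^ 4 ∂μ = 3) :
    ∫ ω, (∑ i, (x i) ^ 6 + ∑ i, (y i) ^ 6
        - 20 * ((∑ i, (x i) ^ 3 * r i ω) * (∑ i, (y i) ^ 3 * r i ω))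
        + 15 * ((∑ i, (x i) ^ 2 * r i ω) * (∑ i, (y i) ^ 4 * r i ω))
        + 15 * ((∑ i, (x i) ^ 4 * r i ω) * (∑ i, (y i) ^ 2 * r i ω))
        - 6 * ((∑ i, x i * r i ω) * (∑ i, (y i) ^ 5 * r i ω))
        - 6 * ((∑ i, (x i) ^ 5 * r i ω) * (∑ i, y i * r i ω))) ∂μ
      = ∑ i, (x i - y i) ^ 6 :=
  l6_estimator_unbiased_general μ D r x y hmeas hindep h1 h2
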